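/- Let (S,d) be a compact metric space, c̃ : S × S → [0,∞) an L-Lipschitz function in its first argument (uniformly in the second), k > 1, and λ > 0. Define h(w,y,λ) = sup_x { -c̃(x,y) - λ·d(x,w)^k }. Then for all w, y: h(w,y,λ) + c̃(w,y) ≤ 2·L^{k/(k-1)}/λ^{1/(k-1)}. -/

import Mathlib

/-!
By the Lipschitz bound, `-c̃(x,y) + c̃(w,y) - λ d(x,w)^k ≤ L t - λ t^k` with `t = d(x,w)`, so it
suffices to bound `L t - λ t^k` uniformly in `t ≥ 0`. Below the threshold `s = (L/λ)^{1/(k-1)}`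
this is at most `L s = L^{k/(k-1)} / λ^{1/(k-1)}`; above it the penalty `λ t^k` dominates `L t`.
-/

namespace Real

variable {L lam k : ℝ}

lemma mul_div_rpow_one_div_sub_one (hL : 0 < L) (hlam : 0 < lam) (hk : 1 < k) :
    L * (L / lam) ^ (1 / (k - 1)) = L ^ (k / (k - 1)) / lam ^ (1 / (k - 1)) := by
  have hk1 : k - 1 ≠ 0 := by linarith
  rw [div_rpow hL.le hlam.le, ← mul_div_assoc]
  congr 1
  rw [← rpow_one_add' hL.le (by positivity)]
  congr 1
  field_simp
  ring

lemma mul_le_mul_rpow_of_div_rpow_le (hL : 0 ≤ L) (hlam : 0 < lam) (hk : 1 < k) {t : ℝ}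
    (ht : 0 ≤ t) (hs : (L / lam) ^ (1 / (k - 1)) ≤ t) :
    L * t ≤ lam * t ^ k := by
  have hk1 : 0 < k - 1 := by linarith
  have hpow : L / lam ≤ t ^ (k - 1) := by
    have := rpow_le_rpow (by positivity) hs hk1.le
    rwa [← rpow_mul (by positivity), one_div_mul_cancel hk1.ne', rpow_one] at this
  have hLt : L ≤ lam * t ^ (k - 1) := by rwa [div_le_iff₀ hlam, mul_comm] at hpow
  calc L * t ≤ lam * t ^ (k - 1) * t := mul_le_mul_of_nonneg_right hLt ht
    _ = lam * t ^ k := by rw [mul_assoc, ← rpow_add_one' ht (by linarith), sub_add_cancel]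

lemma mul_sub_mul_rpow_le (hL : 0 < L) (hlam : 0 < lam) (hk : 1 < k) {t : ℝ} (ht : 0 ≤ t) :
    L * t - lam * t ^ k ≤ L ^ (k / (k - 1)) / lam ^ (1 / (k - 1)) := by
  rw [← mul_div_rpow_one_div_sub_one hL hlam hk]
  rcases le_total t ((L / lam) ^ (1 / (k - 1))) with hts | hts
  · have : 0 ≤ lam * t ^ k := by positivity
    nlinarith
  · have : 0 ≤ L * (L / lam) ^ (1 / (k - 1)) := by positivity
    linarith [mul_le_mul_rpow_of_div_rpow_le hL.le hlam hk ht hts]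

end Real

theorem stmt_18_general {S : Type*} [MetricSpace S]
    (ct : S → S → ℝ)
    (L : ℝ) (hL : 0 < L)
    (hlip : ∀ x x' y : S, |ct x y - ct x' y| ≤ L * dist x x')
    (k lam : ℝ) (hk : 1 < k) (hlam : 0 < lam) :
    ∀ w y : S,
      (⨆ x : S, (-ct x y - lam * (dist x w) ^ k)) + ct w y ≤
        2 * L ^ (k / (k - 1)) / lam ^ (1 / (k - 1)) := by
  intro w y
  have : Nonempty S := ⟨w⟩
  rw [mul_div_assoc]
  refine le_sub_iff_add_le.mp (ciSup_le fun x => ?_)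
  have hcost : ct w y - ct x y ≤ L * dist x w :=
    (le_abs_self _).trans (dist_comm w x ▸ hlip w x y)
  have hpenalty := Real.mul_sub_mul_rpow_le hL hlam hk (@dist_nonneg _ _ x w)
  have : 0 ≤ L ^ (k / (k - 1)) / lam ^ (1 / (k - 1)) := by positivity
  linarith

theorem stmt_18 {S : Type*} [MetricSpace S] [CompactSpace S] [Nonempty S]
    (ct : S → S → ℝ) (hct : ∀ x y, 0 ≤ ct x y)
    (L : ℝ) (hL : 0 < L)
    (hlip : ∀ x x' y : S, |ct x y - ct x' y| ≤ L * dist x x')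
    (k lam : ℝ) (hk : 1 < k) (hlam : 0 < lam) :
    ∀ w y : S,
      (⨆ x : S, (-ct x y - lam * (dist x w) ^ k)) + ct w y ≤
        2 * L ^ (k / (k - 1)) / lam ^ (1 / (k - 1)) :=
  stmt_18_general ct L hL hlip k lam hk hlam
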